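/- Let H be a k-uniform hypergraph with n vertices, m ≥ 1 hyperedges, and minimum degree d_min. Then s_Q(H) ≥ 2d_min − sqrt((Z₁(H) + α/(k-1)² − 4d_min²)/(n−1)), where Z₁(H) = Σ_i d_i² is the first Zagreb index and α = Σ_{i∈V} Σ_{j∼i} d_ij². -/

import Mathlib

open Finset

/-- The set of hyperedges containing both `i` and `j`. -/
def edgesBetween {n : ℕ} (E : Finset (Finset (Fin n))) (i j : Fin n) :
    Finset (Finset (Fin n)) :=
  E.filter fun e => i ∈ e ∧ j ∈ e

/-- The degree of vertex `i`: the number of hyperedges containing `i`. -/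
def hdeg {n : ℕ} (E : Finset (Finset (Fin n))) (i : Fin n) : ℕ :=
  (E.filter fun e => i ∈ e).card

/-- Two (distinct) vertices are adjacent if some hyperedge contains both. -/
def Adj {n : ℕ} (E : Finset (Finset (Fin n))) (i j : Fin n) : Prop :=
  i ≠ j ∧ ∃ e ∈ E, i ∈ e ∧ j ∈ e

/-- The neighbours of a vertex. -/
noncomputable def neighbors {n : ℕ} (E : Finset (Finset (Fin n))) (i : Fin n) :
    Finset (Fin n) :=
  @Finset.filter _ (fun j => Adj E i j) (Classical.decPred _) Finset.univ

/-- Banerjee's adjacency matrix of a hypergraph: `A i j = ∑_{e ∋ i,j} 1/(|e|-1)`. -/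
noncomputable def adjMat {n : ℕ} (E : Finset (Finset (Fin n))) :
    Matrix (Fin n) (Fin n) ℝ :=
  Matrix.of fun i j =>
    if i = j then 0 else ∑ e ∈ edgesBetween E i j, 1 / ((e.card : ℝ) - 1)

/-- The signless Laplacian matrix `Q = D + A`. -/
noncomputable def signlessLap {n : ℕ} (E : Finset (Finset (Fin n))) :
    Matrix (Fin n) (Fin n) ℝ :=
  Matrix.diagonal (fun i => (hdeg E i : ℝ)) + adjMat E

/-- Largest eigenvalue of a real matrix. -/
noncomputable def qmax {n : ℕ} (M : Matrix (Fin n) (Fin n) ℝ) : ℝ :=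
  sSup (spectrum ℝ M)

/-- Smallest eigenvalue of a real matrix. -/
noncomputable def qmin {n : ℕ} (M : Matrix (Fin n) (Fin n) ℝ) : ℝ :=
  sInf (spectrum ℝ M)

/-- A hypergraph is `k`-uniform if every hyperedge has exactly `k` vertices. -/
def IsUniform {n : ℕ} (k : ℕ) (E : Finset (Finset (Fin n))) : Prop :=
  ∀ e ∈ E, e.card = k

/-- A hypergraph is connected if any two vertices are joined by a walk. -/
def Conn {n : ℕ} (E : Finset (Finset (Fin n))) : Prop :=
  ∀ i j : Fin n, Relation.ReflTransGen (Adj E) i j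

/-! Each row of `Q` sums to `2 dᵢ`, since a vertex meets `k - 1` other vertices in each of its
edges; the Rayleigh quotient of the all-ones vector therefore gives `q₁ ≥ 2 d_min`. The squared
eigenvalues sum to `trace Q² = Z₁ + α/(k-1)²`, so `(n - 1) q_n² ≤ Z₁ + α/(k-1)² - q₁²` once
`q_n ≥ 0`; when `q_n < 0` the bound already follows from `q₁ ≥ 2 d_min`. -/

open Matrix

section Spectrum

variable {n : ℕ} {M : Matrix (Fin n) (Fin n) ℝ}

open Polynomial in
lemma Matrix.IsHermitian.trace_mul_self (hM : M.IsHermitian) :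
    (M * M).trace = ∑ i, hM.eigenvalues i ^ 2 := by
  have hroots : (cfc (· ^ 2 : ℝ → ℝ) M).charpoly.roots =
      Multiset.map (fun i => hM.eigenvalues i ^ 2) Finset.univ.val := by
    rw [hM.charpoly_cfc_eq, roots_prod _ _ (prod_ne_zero_iff.mpr fun i _ => X_sub_C_ne_zero _)]
    simp only [roots_X_sub_C, Multiset.bind_singleton, RCLike.ofReal_real_eq_id, id]
  have hsq : cfc (· ^ 2 : ℝ → ℝ) M = M * M := by rw [cfc_pow_id M 2 hM.isSelfAdjoint, sq]
  rw [← hsq, trace_eq_sum_roots_charpoly_of_splits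
    (splits_iff_card_roots.mpr (by simp [hroots])), hroots]
  rfl

open scoped MatrixOrder in
lemma Matrix.IsHermitian.dotProduct_mulVec_le_qmax (hM : M.IsHermitian) (x : Fin n → ℝ) :
    x ⬝ᵥ (M *ᵥ x) ≤ qmax M * (x ⬝ᵥ x) := by
  have hle : M ≤ algebraMap ℝ _ (qmax M) := by
    rw [le_algebraMap_iff_spectrum_le hM.isSelfAdjoint]
    exact fun μ hμ => le_csSup M.finite_real_spectrum.bddAbove hμ
  have := (Matrix.le_iff.mp hle).dotProduct_mulVec_nonneg x
  rwa [sub_mulVec, dotProduct_sub, sub_nonneg, Algebra.algebraMap_eq_smul_one, smul_mulVec,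
    one_mulVec, dotProduct_smul, smul_eq_mul] at this

lemma Matrix.IsHermitian.exists_eigenvalues_eq_qmax (hM : M.IsHermitian) (hn : n ≠ 0) :
    ∃ i, hM.eigenvalues i = qmax M := by
  have : Nonempty (Fin n) := ⟨⟨0, Nat.pos_of_ne_zero hn⟩⟩
  rw [qmax, hM.spectrum_real_eq_range_eigenvalues]
  exact (Set.range_nonempty _).csSup_mem (Set.finite_range _)

lemma Matrix.IsHermitian.qmin_le_eigenvalues (hM : M.IsHermitian) (i : Fin n) :
    qmin M ≤ hM.eigenvalues i :=
  csInf_le M.finite_real_spectrum.bddBelow (hM.eigenvalues_mem_spectrum_real i)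

lemma Matrix.IsHermitian.le_qmax_of_le_sum_row (hM : M.IsHermitian) (hn : n ≠ 0) {c : ℝ}
    (hc : ∀ i, c ≤ ∑ j, M i j) : c ≤ qmax M := by
  have hrayleigh := hM.dotProduct_mulVec_le_qmax 1
  have hsum : (n : ℝ) * c ≤ 1 ⬝ᵥ (M *ᵥ 1) := by
    simpa [dotProduct, mulVec] using Finset.sum_le_sum fun i (_ : i ∈ univ) => hc i
  have hones : (1 : Fin n → ℝ) ⬝ᵥ 1 = n := by simp [dotProduct]
  have hn' : (0 : ℝ) < n := by exact_mod_cast Nat.pos_of_ne_zero hn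
  rw [hones] at hrayleigh
  nlinarith

lemma Matrix.IsHermitian.qmax_sq_add_mul_qmin_sq_le_trace (hM : M.IsHermitian) (hn : n ≠ 0)
    (hmin : 0 ≤ qmin M) :
    qmax M ^ 2 + ((n : ℝ) - 1) * qmin M ^ 2 ≤ (M * M).trace := by
  obtain ⟨i₀, hi₀⟩ := hM.exists_eigenvalues_eq_qmax hn
  have hrest : ∑ i ∈ univ.erase i₀, qmin M ^ 2 ≤ ∑ i ∈ univ.erase i₀, hM.eigenvalues i ^ 2 :=
    sum_le_sum fun i _ => pow_le_pow_left₀ hmin (hM.qmin_le_eigenvalues i) 2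
  rw [sum_const, card_erase_of_mem (mem_univ i₀), card_univ, Fintype.card_fin, nsmul_eq_mul,
    Nat.cast_sub (Nat.one_le_iff_ne_zero.mpr hn), Nat.cast_one] at hrest
  rw [hM.trace_mul_self, ← add_sum_erase _ _ (mem_univ i₀), hi₀]
  linarith

lemma Matrix.IsHermitian.sub_sqrt_le_qmax_sub_qmin (hM : M.IsHermitian) (hn : 2 ≤ n) {c : ℝ}
    (hc : 0 ≤ c) (hcq : c ≤ qmax M) :
    c - √(((M * M).trace - c ^ 2) / ((n : ℝ) - 1)) ≤ qmax M - qmin M := by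
  rcases le_or_gt (qmin M) 0 with hmin | hmin
  · linarith [Real.sqrt_nonneg (((M * M).trace - c ^ 2) / ((n : ℝ) - 1))]
  have hn' : (0 : ℝ) < n - 1 := by
    have : (2 : ℝ) ≤ n := by exact_mod_cast hn
    linarith
  have htrace := hM.qmax_sq_add_mul_qmin_sq_le_trace (by omega) hmin.le
  have hc2 : c ^ 2 ≤ qmax M ^ 2 := pow_le_pow_left₀ hc hcq 2
  have : qmin M ^ 2 ≤ ((M * M).trace - c ^ 2) / ((n : ℝ) - 1) := by
    rw [le_div_iff₀ hn']
    linarith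
  linarith [(le_abs_self _).trans (Real.abs_le_sqrt this)]

end Spectrum

section Hypergraph

variable {n k : ℕ} {E : Finset (Finset (Fin n))}

lemma edgesBetween_comm (E : Finset (Finset (Fin n))) (i j : Fin n) :
    edgesBetween E i j = edgesBetween E j i :=
  filter_congr fun _ _ => and_comm

lemma card_edgesBetween_self (E : Finset (Finset (Fin n))) (i : Fin n) :
    (edgesBetween E i i).card = hdeg E i := by
  simp only [edgesBetween, and_self, hdeg]

lemma edgesBetween_eq_empty_of_not_adj {i j : Fin n} (hij : i ≠ j) (h : ¬ Adj E i j) :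
    edgesBetween E i j = ∅ :=
  filter_eq_empty_iff.mpr fun e he hie => h ⟨hij, e, he, hie⟩

lemma mem_neighbors {i j : Fin n} : j ∈ neighbors E i ↔ Adj E i j := by
  simp [neighbors]

lemma sum_card_edgesBetween (hU : IsUniform k E) (i : Fin n) :
    ∑ j, (edgesBetween E i j).card = k * hdeg E i := by
  have : ∀ j, (edgesBetween E i j).card = ∑ e ∈ E.filter (i ∈ ·), if j ∈ e then 1 else 0 := by
    intro j
    rw [sum_boole, filter_filter]
    rfl
  simp_rw [this]
  rw [sum_comm, hdeg, card_eq_sum_ones, mul_sum]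
  refine sum_congr rfl fun e he => ?_
  rw [sum_boole, filter_univ_mem, hU e (mem_filter.mp he).1]
  simp

lemma signlessLap_isHermitian (E : Finset (Finset (Fin n))) : (signlessLap E).IsHermitian := by
  ext i j
  by_cases h : i = j
  · subst h; rfl
  · simp [signlessLap, adjMat, h, Ne.symm h, edgesBetween_comm E i j]

lemma signlessLap_apply_self (E : Finset (Finset (Fin n))) (i : Fin n) :
    signlessLap E i i = hdeg E i := by
  simp [signlessLap, adjMat]

lemma signlessLap_apply_of_ne (hU : IsUniform k E) {i j : Fin n} (h : i ≠ j) :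
    signlessLap E i j = (edgesBetween E i j).card / ((k : ℝ) - 1) := by
  simp only [signlessLap, adjMat, Matrix.add_apply, diagonal_apply_ne _ h, of_apply, if_neg h,
    zero_add]
  rw [sum_congr rfl fun e he => by rw [hU e (mem_filter.mp he).1], sum_const, nsmul_eq_mul,
    mul_one_div]

lemma sum_signlessLap_row (hk : 2 ≤ k) (hU : IsUniform k E) (i : Fin n) :
    ∑ j, signlessLap E i j = 2 * hdeg E i := by
  have hk' : (k : ℝ) - 1 ≠ 0 := by
    have : (2 : ℝ) ≤ k := by exact_mod_cast hk
    linarith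
  have hrow : ∑ j ∈ univ.erase i, ((edgesBetween E i j).card : ℝ) = (k - 1) * hdeg E i := by
    have := congrArg (Nat.cast (R := ℝ)) (sum_card_edgesBetween hU i)
    push_cast at this
    rw [← add_sum_erase _ _ (mem_univ i), card_edgesBetween_self] at this
    linarith
  rw [← add_sum_erase _ _ (mem_univ i), signlessLap_apply_self,
    sum_congr rfl fun j hj => signlessLap_apply_of_ne hU (ne_of_mem_erase hj).symm,
    ← sum_div, hrow]
  field_simp
  ring

lemma sum_sq_signlessLap_row (hU : IsUniform k E) (i : Fin n) :
    ∑ j, signlessLap E i j ^ 2 = (hdeg E i : ℝ) ^ 2 +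
      (∑ j ∈ neighbors E i, ((edgesBetween E i j).card : ℝ) ^ 2) / ((k : ℝ) - 1) ^ 2 := by
  have hnbr : ∑ j ∈ neighbors E i, ((edgesBetween E i j).card : ℝ) ^ 2 =
      ∑ j ∈ univ.erase i, ((edgesBetween E i j).card : ℝ) ^ 2 := by
    refine sum_subset (fun j hj => mem_erase.mpr ⟨(mem_neighbors.mp hj).1.symm, mem_univ j⟩)
      fun j hj hnj => ?_
    rw [edgesBetween_eq_empty_of_not_adj (ne_of_mem_erase hj).symm (mt mem_neighbors.mpr hnj)]
    simp
  rw [← add_sum_erase _ _ (mem_univ i), signlessLap_apply_self, hnbr, sum_div]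
  congr 1
  exact sum_congr rfl fun j hj => by
    rw [signlessLap_apply_of_ne hU (ne_of_mem_erase hj).symm, div_pow]

lemma trace_signlessLap_mul_self (hU : IsUniform k E) :
    (signlessLap E * signlessLap E).trace = (∑ i : Fin n, (hdeg E i : ℝ) ^ 2) +
      (∑ i : Fin n, ∑ j ∈ neighbors E i, ((edgesBetween E i j).card : ℝ) ^ 2) /
        ((k : ℝ) - 1) ^ 2 := by
  have hsymm : ∀ i j, signlessLap E j i = signlessLap E i j := fun i j => by
    simpa using (signlessLap_isHermitian E).apply i j
  simp only [trace, diag_apply, mul_apply]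
  rw [sum_div, ← sum_add_distrib]
  refine sum_congr rfl fun i _ => ?_
  rw [← sum_sq_signlessLap_row hU]
  exact sum_congr rfl fun j _ => by rw [hsymm i j, sq]

end Hypergraph

theorem stmt_19_general (n k : ℕ) (hn : 2 ≤ n) (hk : 2 ≤ k) (E : Finset (Finset (Fin n)))
    (hU : IsUniform k E) :
    qmax (signlessLap E) - qmin (signlessLap E) ≥
      2 * (⨅ i : Fin n, (hdeg E i : ℝ)) -
        Real.sqrt (((∑ i : Fin n, (hdeg E i : ℝ) ^ 2) +
            (∑ i : Fin n, ∑ j ∈ neighbors E i, ((edgesBetween E i j).card : ℝ) ^ 2) /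
              ((k : ℝ) - 1) ^ 2 -
            4 * (⨅ i : Fin n, (hdeg E i : ℝ)) ^ 2) / ((n : ℝ) - 1)) := by
  have : NeZero n := ⟨by omega⟩
  have hQ := signlessLap_isHermitian E
  have hd : 0 ≤ ⨅ i : Fin n, (hdeg E i : ℝ) := le_ciInf fun i => Nat.cast_nonneg _
  have hq : 2 * ⨅ i : Fin n, (hdeg E i : ℝ) ≤ qmax (signlessLap E) :=
    hQ.le_qmax_of_le_sum_row (by omega) fun i => by
      rw [sum_signlessLap_row hk hU]
      gcongr
      exact ciInf_le (Finite.bddBelow_range _) i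
  have := hQ.sub_sqrt_le_qmax_sub_qmin hn (by positivity) hq
  rwa [trace_signlessLap_mul_self hU, mul_pow, show (2 : ℝ) ^ 2 = 4 by norm_num] at this

theorem stmt_19 (n k : ℕ) (hn : 2 ≤ n) (hk : 2 ≤ k) (E : Finset (Finset (Fin n)))
    (hU : IsUniform k E) (hm : 1 ≤ E.card) :
    qmax (signlessLap E) - qmin (signlessLap E) ≥
      2 * (⨅ i : Fin n, (hdeg E i : ℝ)) -
        Real.sqrt (((∑ i : Fin n, (hdeg E i : ℝ) ^ 2) +
            (∑ i : Fin n, ∑ j ∈ neighbors E i, ((edgesBetween E i j).card : ℝ) ^ 2) /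
              ((k : ℝ) - 1) ^ 2 -
            4 * (⨅ i : Fin n, (hdeg E i : ℝ)) ^ 2) / ((n : ℝ) - 1)) :=
  stmt_19_general n k hn hk E hU
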